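/- For all n ≥ 1, π_{n+1} ≥ n q^n p_n, where π_{n+1} is the probability that G(n+1,p) has an isolated vertex, p_n is the probability that G(n,p) is connected, and q = 1-p. -/

import Mathlib

open Classical Finset

noncomputable section

/-- Probability that `G(n,p)` equals a given graph `g`. -/
def graphProb {n : ℕ} (p : ℝ) (g : SimpleGraph (Fin n)) : ℝ :=
  p ^ g.edgeSet.ncard * (1 - p) ^ (n.choose 2 - g.edgeSet.ncard)

/-- Probability that `G(n,p)` satisfies the predicate `P`. -/
def probEvent (n : ℕ) (p : ℝ) (P : SimpleGraph (Fin n) → Prop) : ℝ :=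
  ∑ g : SimpleGraph (Fin n), if P g then graphProb p g else 0

/-- Number of connected components. -/
def numComp {n : ℕ} (g : SimpleGraph (Fin n)) : ℕ := Nat.card g.ConnectedComponent

/-- Probability that `G(n,p)` is connected. -/
def connProb (n : ℕ) (p : ℝ) : ℝ := probEvent n p (fun g => g.Connected)

/-- `E[(ν_n - 1)^{\underline s}]`. -/
def Efall (n : ℕ) (p : ℝ) (s : ℕ) : ℝ :=
  ∑ g : SimpleGraph (Fin n), ((numComp g - 1).descFactorial s : ℝ) * graphProb p g

/-- `E[(ν_n)^{\underline s}]`. -/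
def EfallNu (n : ℕ) (p : ℝ) (s : ℕ) : ℝ :=
  ∑ g : SimpleGraph (Fin n), ((numComp g).descFactorial s : ℝ) * graphProb p g

/-- Probability that `G(n,p)` has an isolated vertex. -/
def isolProb (n : ℕ) (p : ℝ) : ℝ :=
  probEvent n p (fun g => ∃ v, ∀ w, ¬ g.Adj v w)

/-! If `v` is isolated in `G(n+1,p)`, the graph is the image of the graph `G - v` on the other `n`
vertices, and the `n` non-edges at `v` cost a factor `(1-p)^n`; hence the event "`v` is isolated and
`G - v` is connected" has probability `(1-p)^n p_n`. For `n ≥ 2` these events are disjoint for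
different `v`, since a connected graph on at least two vertices has no isolated vertex, and each of
them implies that `G(n+1,p)` has an isolated vertex. -/

open SimpleGraph

variable {n : ℕ} {p : ℝ}

lemma graphProb_nonneg (hp0 : 0 ≤ p) (hp1 : p ≤ 1) (g : SimpleGraph (Fin n)) :
    0 ≤ graphProb p g :=
  mul_nonneg (pow_nonneg hp0 _) (pow_nonneg (sub_nonneg.mpr hp1) _)

lemma ncard_edgeSet_le_choose_two (g : SimpleGraph (Fin n)) : g.edgeSet.ncard ≤ n.choose 2 := by
  simpa [Set.ncard_eq_toFinset_card', SimpleGraph.edgeFinset] using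
    card_edgeFinset_le_card_choose_two (G := g)

lemma ncard_edgeSet_map {V W : Type*} (f : V ↪ W) (G : SimpleGraph V) :
    (G.map f).edgeSet.ncard = G.edgeSet.ncard := by
  rw [edgeSet_map, Set.ncard_image_of_injective _ f.sym2Map.injective]

lemma graphProb_map (p : ℝ) (f : Fin n ↪ Fin (n + 1)) (h : SimpleGraph (Fin n)) :
    graphProb p (h.map f) = (1 - p) ^ n * graphProb p h := by
  have hle := ncard_edgeSet_le_choose_two h
  have hchoose : (n + 1).choose 2 = n.choose 2 + n := by
    rw [Nat.choose_succ_succ, Nat.choose_one_right, Nat.add_comm]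
  rw [graphProb, graphProb, ncard_edgeSet_map, hchoose,
    show n.choose 2 + n - h.edgeSet.ncard = n.choose 2 - h.edgeSet.ncard + n by omega, pow_add]
  ring

lemma isIsolated_map_succAboveEmb (v : Fin (n + 1)) (h : SimpleGraph (Fin n)) :
    (h.map v.succAboveEmb).IsIsolated v := by
  intro w hw
  obtain ⟨a, b, -, ha, -⟩ := (map_adj _ _ _ _).mp hw
  exact v.succAbove_ne a ha

lemma map_comap_succAboveEmb_of_isIsolated {g : SimpleGraph (Fin (n + 1))} {v : Fin (n + 1)}
    (hv : g.IsIsolated v) : (g.comap v.succAboveEmb).map v.succAboveEmb = g := by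
  refine le_antisymm (map_comap_le _ _) fun x y hxy => ?_
  obtain ⟨a, rfl⟩ := Fin.exists_succAbove_eq fun h : x = v => hv y (h ▸ hxy)
  obtain ⟨b, rfl⟩ := Fin.exists_succAbove_eq fun h : y = v => hv _ (h ▸ hxy.symm)
  exact (map_adj _ _ _ _).mpr ⟨a, b, hxy, rfl, rfl⟩

lemma probEvent_isIsolated_and_comap (p : ℝ) (v : Fin (n + 1))
    (P : SimpleGraph (Fin n) → Prop) :
    probEvent (n + 1) p (fun g => g.IsIsolated v ∧ P (g.comap v.succAboveEmb))
      = (1 - p) ^ n * probEvent n p P := by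
  rw [probEvent, probEvent, Finset.mul_sum]
  refine (Fintype.sum_of_injective (·.map v.succAboveEmb) (SimpleGraph.map_injective _) _ _
    ?_ ?_).symm
  · intro g hg
    exact if_neg fun ⟨hv, _⟩ => hg ⟨_, map_comap_succAboveEmb_of_isIsolated hv⟩
  · intro h
    simp only [comap_map_eq, isIsolated_map_succAboveEmb, true_and, graphProb_map, mul_ite,
      mul_zero]

/-- `g.comap v.succAboveEmb` is `g - v` with its vertices relabelled by `Fin n`. -/
def IsolatedWithConnectedRest (v : Fin (n + 1)) (g : SimpleGraph (Fin (n + 1))) : Prop :=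
  g.IsIsolated v ∧ (g.comap v.succAboveEmb).Connected

lemma probEvent_isolatedWithConnectedRest (p : ℝ) (v : Fin (n + 1)) :
    probEvent (n + 1) p (IsolatedWithConnectedRest v) = (1 - p) ^ n * connProb n p :=
  probEvent_isIsolated_and_comap p v _

lemma eq_of_isIsolated_of_connected_comap [Nontrivial (Fin n)] {g : SimpleGraph (Fin (n + 1))}
    {u v : Fin (n + 1)} (hu : g.IsIsolated u) (hv : (g.comap v.succAboveEmb).Connected) :
    u = v := by
  by_contra huv
  obtain ⟨i, rfl⟩ := Fin.exists_succAbove_eq huv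
  exact hv.preconnected.not_isIsolated i fun w hw => hu _ hw

lemma sum_probEvent_le_probEvent {ι : Type*} [Fintype ι] (hp0 : 0 ≤ p) (hp1 : p ≤ 1)
    {A : ι → SimpleGraph (Fin n) → Prop} {B : SimpleGraph (Fin n) → Prop}
    (hAB : ∀ i g, A i g → B g) (hA : ∀ g i j, A i g → A j g → i = j) :
    ∑ i, probEvent n p (A i) ≤ probEvent n p B := by
  unfold probEvent
  rw [Finset.sum_comm]
  refine Finset.sum_le_sum fun g _ => ?_
  rw [← Finset.sum_filter, Finset.sum_const, nsmul_eq_mul]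
  by_cases hB : B g
  · have hcard : (Finset.univ.filter (A · g)).card ≤ 1 :=
      Finset.card_le_one.mpr fun i hi j hj =>
        hA g i j (Finset.mem_filter.mp hi).2 (Finset.mem_filter.mp hj).2
    rw [if_pos hB]
    exact mul_le_of_le_one_left (graphProb_nonneg hp0 hp1 g) (by exact_mod_cast hcard)
  · have hempty : Finset.univ.filter (A · g) = ∅ :=
      Finset.filter_false_of_mem fun i _ => mt (hAB i g) hB
    simp [hempty, hB]

theorem isolProb_ge_connProb_general (p : ℝ) (hp0 : 0 ≤ p) (hp1 : p ≤ 1) (n : ℕ) :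
    isolProb (n + 1) p ≥ n * (1 - p) ^ n * connProb n p := by
  -- On two vertices both can be isolated with a connected rest, so only `n` vertices are used.
  calc (n : ℝ) * (1 - p) ^ n * connProb n p
      = ∑ i : Fin n, probEvent (n + 1) p (IsolatedWithConnectedRest i.castSucc) := by
        simp [probEvent_isolatedWithConnectedRest, mul_assoc]
    _ ≤ isolProb (n + 1) p := by
        refine sum_probEvent_le_probEvent hp0 hp1 (fun i g hi => ⟨_, hi.1⟩)
          fun g i j hi hj => ?_
        by_contra hij
        have : Nontrivial (Fin n) := ⟨⟨i, j, hij⟩⟩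
        exact hij (Fin.castSucc_injective _ (eq_of_isIsolated_of_connected_comap hi.1 hj.2))

theorem isolProb_ge_connProb (p : ℝ) (hp0 : 0 ≤ p) (hp1 : p ≤ 1) (n : ℕ) (hn : 1 ≤ n) :
    isolProb (n + 1) p ≥ n * (1 - p) ^ n * connProb n p :=
  isolProb_ge_connProb_general p hp0 hp1 n
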